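/- For each integer r ≥ 1 and even n ≥ 2, the r-th graded piece Ω_r of Ω (polynomials homogeneous of total degree r in the variables xᵢ) is contained in (x₀,...,x_{n/2 - 1})^{r-1} + Qₙ, where Qₙ is the fundamental Q-ideal. -/

import Mathlib

open MvPolynomial

/-- The down operator `Δ` on `Ω = k[x₀, x₁, x₂, ...]`. -/
noncomputable def downOp (k : Type*) [Field k] [CharZero k] :
    Derivation k (MvPolynomial ℕ k) (MvPolynomial ℕ k) :=
  MvPolynomial.mkDerivation k (fun n => if n = 0 then 0 else X (n - 1))

/-- `θₙ⁽⁰⁾ = Σ_{i=0}^{n} (-1)ⁱ xᵢ x_{n-i}`. -/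
noncomputable def theta0 (k : Type*) [Field k] [CharZero k] (n : ℕ) : MvPolynomial ℕ k :=
  ∑ i ∈ Finset.range (n + 1), (-1 : MvPolynomial ℕ k) ^ i * X i * X (n - i)

/-- `Ω_{(2,m)}`, the span of the monomials `xᵢ x_{m-i}` for `0 ≤ i ≤ m`. -/
noncomputable def quadSpace (k : Type*) [Field k] [CharZero k] (m : ℕ) :
    Submodule k (MvPolynomial ℕ k) :=
  Submodule.span k {p | ∃ i ≤ m, p = X i * X (m - i)}

/-!
Put `h = n / 2`, let `Lₛ` be the span of the `xᵢ xⱼ` with `i + j = s` and `i < h`, and `Cₛ` the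
span of the cable vertices `θ m (s - m)`, `n ≤ m ≤ s` even. The heart of the proof is
`Ω_{(2,s)} ⊆ Lₛ + Cₛ` for all `s`, by induction on `s`. For `s < n` every `xᵢ xⱼ` of weight `s`
has an index below `h`. For larger `s`, write `Δq = f + g` with `f ∈ L_{s-1}`, `g ∈ C_{s-1}` and
lift `g` along the cables to `g' ∈ Cₛ`; then `Δ(q - g') ∈ L_{s-1}`, and every quadratic form of
weight `s` with this property is, modulo `Lₛ`, a multiple of `θₛ⁽⁰⁾`, which lies in `Cₛ` (it is
`0` for odd `s`).

With `𝔪 = (x₀, x₁, ...)` and `I = (x₀, ..., x_{h-1})` this says `𝔪² ≤ I 𝔪 + Qₙ`, whence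
`𝔪 ^ (r + 1) ≤ I ^ r 𝔪 + Qₙ`, and a form of degree `r` lies in `𝔪 ^ r`.
-/

open Finset

theorem Ideal.pow_succ_le_pow_mul_sup {R : Type*} [CommSemiring R] {I M Q : Ideal R}
    (h : M ^ 2 ≤ I * M ⊔ Q) (r : ℕ) : M ^ (r + 1) ≤ I ^ r * M ⊔ Q := by
  induction r with
  | zero => simp
  | succ r ih =>
    calc M ^ (r + 1 + 1) = M ^ (r + 1) * M := pow_succ _ _
      _ ≤ (I ^ r * M ⊔ Q) * M := Ideal.mul_mono_left ih
      _ = I ^ r * M ^ 2 ⊔ Q * M := by rw [Ideal.sup_mul, mul_assoc, ← sq]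
      _ ≤ I ^ r * (I * M ⊔ Q) ⊔ Q := sup_le_sup (Ideal.mul_mono_right h) Ideal.mul_le_left
      _ = I ^ (r + 1) * M ⊔ I ^ r * Q ⊔ Q := by rw [Ideal.mul_sup, ← mul_assoc, ← pow_succ]
      _ ≤ I ^ (r + 1) * M ⊔ Q := sup_le (sup_le_sup_left Ideal.mul_le_right _) le_sup_right

theorem MvPolynomial.IsHomogeneous.mem_pow_idealOfVars {σ R : Type*} [CommSemiring R]
    {p : MvPolynomial σ R} {r : ℕ} (hp : p.IsHomogeneous r) : p ∈ idealOfVars σ R ^ r :=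
  (mem_pow_idealOfVars_iff r p).mpr fun x hx => by
    rw [Finsupp.degree_eq_weight_one (R := ℕ)]
    exact (hp (mem_support_iff.mp hx)).ge

section CommSemiring

variable (R : Type*) [CommSemiring R]

noncomputable def lowSpan (h s : ℕ) : Submodule R (MvPolynomial ℕ R) :=
  Submodule.span R {p | ∃ i j, i + j = s ∧ i < h ∧ p = X i * X j}

variable {R}

noncomputable def cableSpan (θ : ℕ → ℕ → MvPolynomial ℕ R) (n s : ℕ) :
    Submodule R (MvPolynomial ℕ R) :=
  Submodule.span R {p | ∃ m, Even m ∧ n ≤ m ∧ m ≤ s ∧ p = θ m (s - m)}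

theorem X_mul_X_mem_lowSpan {h i j s : ℕ} (hs : i + j = s) (hij : i < h ∨ j < h) :
    (X i * X j : MvPolynomial ℕ R) ∈ lowSpan R h s := by
  rcases hij with hi | hj
  · exact Submodule.subset_span ⟨i, j, hs, hi, rfl⟩
  · exact Submodule.subset_span ⟨j, i, by omega, hj, mul_comm _ _⟩

theorem lowSpan_mono {h h' : ℕ} (hh : h ≤ h') (s : ℕ) : lowSpan R h s ≤ lowSpan R h' s :=
  Submodule.span_mono fun _ ⟨i, j, hs, hi, hp⟩ => ⟨i, j, hs, by omega, hp⟩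

theorem lowSpan_succ_le (h s : ℕ) :
    lowSpan R (h + 1) s ≤ lowSpan R h s ⊔ R ∙ (X h * X (s - h)) := by
  refine Submodule.span_le.mpr ?_
  rintro _ ⟨i, j, hs, hi, rfl⟩
  rcases (Nat.lt_succ_iff_lt_or_eq.mp hi) with hi | rfl
  · exact Submodule.mem_sup_left (X_mul_X_mem_lowSpan hs (.inl hi))
  · obtain rfl : j = s - i := by omega
    exact Submodule.mem_sup_right (Submodule.mem_span_singleton_self _)

theorem coeff_X_mul_X (a b i j : ℕ) :
    coeff (Finsupp.single a 1 + Finsupp.single b 1) (X i * X j : MvPolynomial ℕ R) =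
      if (i = a ∧ j = b) ∨ (i = b ∧ j = a) then 1 else 0 := by
  simp [X, monomial_mul, coeff_monomial,
    Finsupp.single_add_single_eq_single_add_single one_ne_zero one_ne_zero]

theorem coeff_eq_zero_of_mem_lowSpan {h a b s : ℕ} (ha : h ≤ a) (hab : a ≤ b) (hs : a + b = s)
    {f : MvPolynomial ℕ R} (hf : f ∈ lowSpan R h s) :
    coeff (Finsupp.single a 1 + Finsupp.single b 1) f = 0 := by
  induction hf using Submodule.span_induction with
  | mem x hx =>
    obtain ⟨i, j, rfl, hi, rfl⟩ := hx
    rw [coeff_X_mul_X, if_neg (by omega)]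
  | zero => exact coeff_zero _
  | add x y _ _ hx hy => rw [coeff_add, hx, hy, add_zero]
  | smul c x _ hx => rw [coeff_smul, hx, smul_zero]

theorem lowSpan_le_restrictScalars (h s : ℕ) :
    lowSpan R h s ≤ (Ideal.span {q : MvPolynomial ℕ R | ∃ i < h, q = X i} *
      idealOfVars ℕ R).restrictScalars R := by
  refine Submodule.span_le.mpr ?_
  rintro _ ⟨i, j, -, hi, rfl⟩
  exact Ideal.mul_mem_mul (Ideal.subset_span ⟨i, hi, rfl⟩) (Ideal.subset_span ⟨j, rfl⟩)

theorem cableSpan_le_restrictScalars (θ : ℕ → ℕ → MvPolynomial ℕ R) (n s : ℕ) :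
    cableSpan θ n s ≤
      (Ideal.span {q | ∃ m j : ℕ, Even m ∧ n ≤ m ∧ q = θ m j}).restrictScalars R := by
  refine Submodule.span_le.mpr ?_
  rintro _ ⟨m, hm, hnm, -, rfl⟩
  exact Ideal.subset_span ⟨m, s - m, hm, hnm, rfl⟩

end CommSemiring

section CharZero

variable {k : Type*} [Field k] [CharZero k]

theorem lowSpan_le_quadSpace (h s : ℕ) : lowSpan k h s ≤ quadSpace k s := by
  refine Submodule.span_le.mpr ?_
  rintro _ ⟨i, j, rfl, -, rfl⟩
  exact Submodule.subset_span ⟨i, by omega, by rw [Nat.add_sub_cancel_left]⟩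

theorem quadSpace_le_lowSpan {h s : ℕ} (hs : s < 2 * h) : quadSpace k s ≤ lowSpan k h s := by
  refine Submodule.span_le.mpr ?_
  rintro _ ⟨i, hi, rfl⟩
  exact X_mul_X_mem_lowSpan (Nat.add_sub_cancel' hi) (by omega)

theorem downOp_X_zero : downOp k (X 0) = 0 := by
  simp [downOp, mkDerivation_X]

theorem downOp_X_succ (i : ℕ) : downOp k (X (i + 1)) = X i := by
  simp [downOp, mkDerivation_X]

theorem downOp_mem_lowSpan {h s : ℕ} {q : MvPolynomial ℕ k} (hq : q ∈ lowSpan k h (s + 1)) :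
    downOp k q ∈ lowSpan k h s := by
  suffices lowSpan k h (s + 1) ≤ (lowSpan k h s).comap (downOp k).toLinearMap from this hq
  refine Submodule.span_le.mpr ?_
  rintro _ ⟨i, j, hs, hi, rfl⟩
  rw [SetLike.mem_coe, Submodule.mem_comap, Derivation.coeFn_coe, Derivation.leibniz,
    smul_eq_mul, smul_eq_mul]
  refine add_mem ?_ ?_
  · rcases j with _ | j
    · rw [downOp_X_zero, mul_zero]; exact zero_mem _
    · rw [downOp_X_succ]; exact X_mul_X_mem_lowSpan (by omega) (.inl hi)
  · rcases i with _ | i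
    · rw [downOp_X_zero, mul_zero]; exact zero_mem _
    · rw [downOp_X_succ]; exact X_mul_X_mem_lowSpan (by omega) (.inr (by omega))

theorem downOp_mem_quadSpace {s : ℕ} {q : MvPolynomial ℕ k} (hq : q ∈ quadSpace k (s + 1)) :
    downOp k q ∈ quadSpace k s :=
  lowSpan_le_quadSpace (s + 2) s
    (downOp_mem_lowSpan (quadSpace_le_lowSpan (h := s + 2) (by omega) hq))

theorem coeff_downOp_X_mul_X {h s : ℕ} (hs : 2 * h ≤ s) :
    coeff (Finsupp.single h 1 + Finsupp.single (s - h) 1)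
      (downOp k (X h * X (s + 1 - h))) = 1 := by
  rw [show s + 1 - h = s - h + 1 by omega, Derivation.leibniz, downOp_X_succ, smul_eq_mul,
    coeff_add, coeff_X_mul_X, if_pos (.inl ⟨rfl, rfl⟩)]
  rcases h with _ | h
  · rw [downOp_X_zero, smul_zero, coeff_zero, add_zero]
  · rw [downOp_X_succ, smul_eq_mul, coeff_X_mul_X, if_neg (by omega), add_zero]

theorem theta0_eq_sum_antidiagonal (s : ℕ) :
    theta0 k s = ∑ p ∈ antidiagonal s, (-1 : k) ^ p.1 • (X p.1 * X p.2) := by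
  rw [theta0, Nat.sum_antidiagonal_eq_sum_range_succ_mk]
  refine sum_congr rfl fun i _ => ?_
  rw [smul_eq_C_mul, map_pow, map_neg, map_one, mul_assoc]

theorem downOp_theta0 (s : ℕ) : downOp k (theta0 k s) = 0 := by
  rcases s with _ | s
  · simp [theta0, downOp_X_zero]
  simp only [theta0_eq_sum_antidiagonal, map_sum, Derivation.map_smul, Derivation.leibniz,
    smul_add, sum_add_distrib]
  rw [Nat.sum_antidiagonal_succ', Nat.sum_antidiagonal_succ]
  simp only [downOp_X_zero, downOp_X_succ, smul_eq_mul, mul_zero, smul_zero, zero_add, pow_succ,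
    mul_neg_one, neg_smul, sum_neg_distrib]
  rw [add_neg_eq_zero]
  exact sum_congr rfl fun p _ => by rw [mul_comm]

theorem theta0_of_odd {s : ℕ} (hs : Odd s) : theta0 k s = 0 := by
  have hneg : theta0 k s = -theta0 k s := by
    conv_rhs => rw [theta0_eq_sum_antidiagonal, ← Nat.sum_antidiagonal_swap]
    rw [theta0_eq_sum_antidiagonal, ← sum_neg_distrib]
    refine sum_congr rfl fun p hp => ?_
    rw [HasAntidiagonal.mem_antidiagonal] at hp
    have hsum : (-1 : k) ^ p.1 * (-1) ^ p.2 = -1 := by rw [← pow_add, hp, hs.neg_one_pow]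
    have hsq : (-1 : k) ^ p.1 * (-1) ^ p.1 = 1 := by rw [← pow_add, Even.neg_one_pow ⟨_, rfl⟩]
    have hsign : (-1 : k) ^ p.2 = -(-1) ^ p.1 := by
      linear_combination (-1 : k) ^ p.1 * hsum - (-1 : k) ^ p.2 * hsq
    rw [Prod.fst_swap, Prod.snd_swap, hsign, neg_smul, neg_neg, mul_comm]
  exact self_eq_neg.mp hneg

theorem X_mul_X_mem_lowSpan_sup_span_theta0 (h : ℕ) :
    (X h * X h : MvPolynomial ℕ k) ∈ lowSpan k h (2 * h) ⊔ k ∙ theta0 k (2 * h) := by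
  have hrest : theta0 k (2 * h) - (-1 : k) ^ h • (X h * X h) ∈ lowSpan k h (2 * h) := by
    have hmem : (h, h) ∈ antidiagonal (2 * h) := by simp [two_mul]
    rw [theta0_eq_sum_antidiagonal, ← add_sum_erase _ _ hmem, add_sub_cancel_left]
    refine sum_mem fun p hp => Submodule.smul_mem _ _ (X_mul_X_mem_lowSpan ?_ ?_)
    · exact HasAntidiagonal.mem_antidiagonal.mp (mem_of_mem_erase hp)
    · have hsum := HasAntidiagonal.mem_antidiagonal.mp (mem_of_mem_erase hp)
      have hne : p ≠ (h, h) := ne_of_mem_erase hp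
      rw [Ne, Prod.ext_iff] at hne
      omega
  have hsq : (-1 : k) ^ h * (-1) ^ h = 1 := by rw [← pow_add, Even.neg_one_pow ⟨h, rfl⟩]
  have hdecomp : (X h * X h : MvPolynomial ℕ k) = (-1 : k) ^ h • theta0 k (2 * h) -
      (-1 : k) ^ h • (theta0 k (2 * h) - (-1 : k) ^ h • (X h * X h)) := by
    rw [smul_sub, smul_smul, hsq, one_smul, sub_sub_cancel]
  rw [hdecomp]
  exact sub_mem
    (Submodule.mem_sup_right (Submodule.smul_mem _ _ (Submodule.mem_span_singleton_self _)))
    (Submodule.mem_sup_left (Submodule.smul_mem _ _ hrest))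

theorem eq_zero_of_downOp_add_smul_mem_lowSpan {h s : ℕ} (hs : 2 * h ≤ s)
    {l : MvPolynomial ℕ k} (hl : l ∈ lowSpan k h (s + 1)) {c : k}
    (hΔ : downOp k (l + c • (X h * X (s + 1 - h))) ∈ lowSpan k h s) : c = 0 := by
  have hcoeff :=
    coeff_eq_zero_of_mem_lowSpan le_rfl (by omega) (Nat.add_sub_cancel' (by omega)) hΔ
  rwa [map_add, Derivation.map_smul, coeff_add, coeff_smul, coeff_downOp_X_mul_X hs,
    coeff_eq_zero_of_mem_lowSpan le_rfl (by omega) (Nat.add_sub_cancel' (by omega))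
      (downOp_mem_lowSpan hl), smul_eq_mul, mul_one, zero_add] at hcoeff

theorem mem_lowSpan_sup_span_theta0 {h s : ℕ} {q : MvPolynomial ℕ k}
    (hq : q ∈ quadSpace k (s + 1)) (hΔ : downOp k q ∈ lowSpan k h s) :
    q ∈ lowSpan k h (s + 1) ⊔ k ∙ theta0 k (s + 1) := by
  -- Descending induction on `h`. The coefficient of `x_h x_{s-h}` in `Δq` detects the component
  -- of `q` along `x_h x_{s+1-h}`, except when `2h = s + 1`, where `x_h²` is `±θ⁽⁰⁾` modulo
  -- `lowSpan`.
  refine Nat.decreasingInduction' (P := fun h => downOp k q ∈ lowSpan k h s →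
      q ∈ lowSpan k h (s + 1) ⊔ k ∙ theta0 k (s + 1)) (fun h _ _ ih hΔ => ?_)
    (show h ≤ h + s + 1 by omega)
    (fun _ => Submodule.mem_sup_left (quadSpace_le_lowSpan (by omega) hq)) hΔ
  rcases lt_or_ge (s + 1) (2 * h) with hlarge | hsmall
  · exact Submodule.mem_sup_left (quadSpace_le_lowSpan hlarge hq)
  obtain ⟨l, hl, t, ht, rfl⟩ := Submodule.mem_sup.mp (ih (lowSpan_mono h.le_succ s hΔ))
  obtain ⟨l', hl', u, hu, rfl⟩ := Submodule.mem_sup.mp (lowSpan_succ_le h (s + 1) hl)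
  obtain ⟨c, rfl⟩ := Submodule.mem_span_singleton.mp hu
  obtain ⟨a, rfl⟩ := Submodule.mem_span_singleton.mp ht
  have hθ : a • theta0 k (s + 1) ∈ lowSpan k h (s + 1) ⊔ k ∙ theta0 k (s + 1) :=
    Submodule.mem_sup_right (Submodule.smul_mem _ a (Submodule.mem_span_singleton_self _))
  rcases hsmall.eq_or_lt with hmid | hlow
  · rw [show s + 1 - h = h by omega]
    rw [← hmid] at hθ hl' ⊢
    exact add_mem (add_mem (Submodule.mem_sup_left hl')
      (Submodule.smul_mem _ c (X_mul_X_mem_lowSpan_sup_span_theta0 h))) hθ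
  · rw [map_add, Derivation.map_smul, downOp_theta0, smul_zero, add_zero] at hΔ
    rw [eq_zero_of_downOp_add_smul_mem_lowSpan (by omega) hl' hΔ, zero_smul, add_zero]
    exact add_mem (Submodule.mem_sup_left hl') hθ

variable {θ : ℕ → ℕ → MvPolynomial ℕ k} {n : ℕ}

theorem cableSpan_le_quadSpace (hhom : ∀ m, Even m → ∀ j, θ m j ∈ quadSpace k (m + j))
    (s : ℕ) : cableSpan θ n s ≤ quadSpace k s := by
  refine Submodule.span_le.mpr ?_
  rintro _ ⟨m, hm, -, hms, rfl⟩
  simpa [Nat.add_sub_cancel' hms] using hhom m hm (s - m)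

theorem cableSpan_le_map_downOp (hcable : ∀ m, Even m → ∀ j, downOp k (θ m (j + 1)) = θ m j)
    (s : ℕ) : cableSpan θ n s ≤ (cableSpan θ n (s + 1)).map (downOp k).toLinearMap := by
  refine Submodule.span_le.mpr ?_
  rintro _ ⟨m, hm, hnm, hms, rfl⟩
  refine ⟨θ m (s + 1 - m), Submodule.subset_span ⟨m, hm, hnm, by omega, rfl⟩, ?_⟩
  rw [Derivation.coeFn_coe, Nat.sub_add_comm hms, hcable m hm]

theorem theta0_mem_cableSpan (hroot : ∀ m, Even m → θ m 0 = theta0 k m) {s : ℕ} (hs : n ≤ s) :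
    theta0 k s ∈ cableSpan θ n s := by
  rcases Nat.even_or_odd s with he | ho
  · exact Submodule.subset_span ⟨s, he, hs, le_rfl, by rw [Nat.sub_self, hroot s he]⟩
  · rw [theta0_of_odd ho]
    exact zero_mem _

theorem quadSpace_le_lowSpan_sup_cableSpan (hroot : ∀ m, Even m → θ m 0 = theta0 k m)
    (hcable : ∀ m, Even m → ∀ j, downOp k (θ m (j + 1)) = θ m j)
    (hhom : ∀ m, Even m → ∀ j, θ m j ∈ quadSpace k (m + j)) (hn : Even n) (hn0 : n ≠ 0)
    (s : ℕ) : quadSpace k s ≤ lowSpan k (n / 2) s ⊔ cableSpan θ n s := by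
  obtain ⟨h, rfl⟩ := hn
  induction s with
  | zero => exact le_sup_of_le_left (quadSpace_le_lowSpan (by omega))
  | succ s ih =>
    rcases lt_or_ge (s + 1) (h + h) with hs | hs
    · exact le_sup_of_le_left (quadSpace_le_lowSpan (by omega))
    intro q hq
    obtain ⟨f, hf, g, hg, hfg⟩ := Submodule.mem_sup.mp (ih (downOp_mem_quadSpace hq))
    obtain ⟨g', hg', rfl⟩ := cableSpan_le_map_downOp hcable s hg
    have hker : q - g' ∈ lowSpan k ((h + h) / 2) (s + 1) ⊔ k ∙ theta0 k (s + 1) := by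
      refine mem_lowSpan_sup_span_theta0 (sub_mem hq (cableSpan_le_quadSpace hhom _ hg')) ?_
      rwa [map_sub, ← hfg, Derivation.coeFn_coe, add_sub_cancel_right]
    have hθ : k ∙ theta0 k (s + 1) ≤ cableSpan θ (h + h) (s + 1) :=
      (Submodule.span_singleton_le_iff_mem _ _).mpr (theta0_mem_cableSpan hroot hs)
    rw [← sub_add_cancel q g']
    exact add_mem (sup_le_sup_left hθ _ hker) (Submodule.mem_sup_right hg')

theorem idealOfVars_sq_le (hroot : ∀ m, Even m → θ m 0 = theta0 k m)
    (hcable : ∀ m, Even m → ∀ j, downOp k (θ m (j + 1)) = θ m j)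
    (hhom : ∀ m, Even m → ∀ j, θ m j ∈ quadSpace k (m + j)) (hn : Even n) (hn0 : n ≠ 0) :
    idealOfVars ℕ k ^ 2 ≤ Ideal.span {q | ∃ i < n / 2, q = X i} * idealOfVars ℕ k ⊔
      Ideal.span {q | ∃ m j : ℕ, Even m ∧ n ≤ m ∧ q = θ m j} := by
  rw [sq, idealOfVars, Ideal.span_mul_span', Ideal.span_le]
  rintro _ ⟨_, ⟨a, rfl⟩, _, ⟨b, rfl⟩, rfl⟩
  have hab : (X a * X b : MvPolynomial ℕ k) ∈ quadSpace k (a + b) :=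
    Submodule.subset_span ⟨a, le_add_right le_rfl, by rw [Nat.add_sub_cancel_left]⟩
  obtain ⟨l, hl, c, hc, hlc⟩ := Submodule.mem_sup.mp
    (quadSpace_le_lowSpan_sup_cableSpan hroot hcable hhom hn hn0 _ hab)
  change X a * X b ∈ _
  rw [← hlc]
  exact add_mem (Submodule.mem_sup_left (lowSpan_le_restrictScalars _ _ hl))
    (Submodule.mem_sup_right (cableSpan_le_restrictScalars θ n _ hc))

end CharZero

/-- For `r ≥ 1` and even `n ≥ 2`, every polynomial homogeneous of total degree `r` lies in
`(x₀,...,x_{n/2-1})^{r-1} + Qₙ`, where `Qₙ` is the fundamental `Q`-ideal, generated by the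
vertices of homogeneous `Δ`-cables rooted at `θₘ⁽⁰⁾` for even `m ≥ n`. -/
theorem homogeneous_mem_pow_sup_Q (k : Type*) [Field k] [CharZero k]
    (θ : ℕ → ℕ → MvPolynomial ℕ k)
    (hroot : ∀ n : ℕ, Even n → θ n 0 = theta0 k n)
    (hcable : ∀ n : ℕ, Even n → ∀ j : ℕ, downOp k (θ n (j + 1)) = θ n j)
    (hhom : ∀ n : ℕ, Even n → ∀ j : ℕ, θ n j ∈ quadSpace k (n + j)) :
    ∀ r : ℕ, 1 ≤ r → ∀ n : ℕ, Even n → 2 ≤ n →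
      ∀ p : MvPolynomial ℕ k, p.IsHomogeneous r →
        p ∈ (Ideal.span {q : MvPolynomial ℕ k | ∃ i < n / 2, q = X i}) ^ (r - 1) ⊔
          Ideal.span {q : MvPolynomial ℕ k | ∃ m j : ℕ, Even m ∧ n ≤ m ∧ q = θ m j} := by
  intro r hr n hn hn2 p hp
  obtain ⟨r, rfl⟩ := Nat.exists_eq_add_of_le' hr
  have hpow :=
    Ideal.pow_succ_le_pow_mul_sup (idealOfVars_sq_le hroot hcable hhom hn (by omega)) r
  exact hpow.trans (sup_le_sup_right Ideal.mul_le_left _) hp.mem_pow_idealOfVars
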